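/- arXiv:2101.04249 — 2 statements merged into one kernel-verified Lean document; each statement's English description precedes it below -/
import Mathlib

section
/- Fix s > 0 (the single-beam SNR |h|²P_T/N_r), δ ∈ (0, 1] (relative amplitude of the reflected path), and blockage probability β ∈ [0, 1). Define the single-beam average throughput C_sb = (1−β)·log₂(1+s) and the two-beam average throughput C_mb = (1−β)²·log₂(1+(1+δ²)s) + β(1−β)·log₂(1+s) + β(1−β)·log₂(1+δ²s). Then C_mb > C_sb. -/
/-! The multi-beam gain over the single beam factors as
`(1 - β) * ((1 - β) * (log₂(1 + (1 + δ²)s) - log₂(1 + s)) + β * log₂(1 + δ²s))`: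
the first term is positive because the reflected path strictly raises the SNR, the second is
nonnegative because `log₂(1 + x) ≥ 0` for `x ≥ 0`. -/

lemma one_sub_mul_lt_blockage_mix {a b c β : ℝ} (hβ0 : 0 ≤ β) (hβ1 : β < 1) (hab : a < b)
    (hc : 0 ≤ c) :
    (1 - β) * a < (1 - β) ^ 2 * b + β * (1 - β) * a + β * (1 - β) * c := by
  have hβ : 0 < 1 - β := sub_pos.2 hβ1
  have hgain : 0 < (1 - β) * ((1 - β) * (b - a) + β * c) :=
    mul_pos hβ (add_pos_of_pos_of_nonneg (mul_pos hβ (sub_pos.2 hab)) (mul_nonneg hβ0 hc))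
  linarith [show (1 - β) ^ 2 * b + β * (1 - β) * a + β * (1 - β) * c - (1 - β) * a
    = (1 - β) * ((1 - β) * (b - a) + β * c) by ring]

theorem stmt_4_general (s δ β : ℝ) (hs : 0 < s) (hδ0 : 0 < δ)
    (hβ0 : 0 ≤ β) (hβ1 : β < 1) :
    (1 - β) * Real.logb 2 (1 + s) <
      (1 - β) ^ 2 * Real.logb 2 (1 + (1 + δ ^ 2) * s)
        + β * (1 - β) * Real.logb 2 (1 + s)
        + β * (1 - β) * Real.logb 2 (1 + δ ^ 2 * s) := by
  have hδs : 0 < δ ^ 2 * s := by positivity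
  have hcombining : Real.logb 2 (1 + s) < Real.logb 2 (1 + (1 + δ ^ 2) * s) :=
    Real.logb_lt_logb one_lt_two (by linarith) (by linarith)
  have hreflected : 0 ≤ Real.logb 2 (1 + δ ^ 2 * s) :=
    Real.logb_nonneg one_lt_two (by linarith)
  exact one_sub_mul_lt_blockage_mix hβ0 hβ1 hcombining hreflected

/-- For single-beam SNR `s > 0`, reflected-path relative amplitude
`δ ∈ (0,1]`, and blockage probability `β ∈ [0,1)`, the two-beam average throughput
`C_mb = (1−β)²log₂(1+(1+δ²)s) + β(1−β)log₂(1+s) + β(1−β)log₂(1+δ²s)` strictly exceeds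
the single-beam average throughput `C_sb = (1−β)log₂(1+s)`. -/
theorem stmt_4 (s δ β : ℝ) (hs : 0 < s) (hδ0 : 0 < δ) (hδ1 : δ ≤ 1)
    (hβ0 : 0 ≤ β) (hβ1 : β < 1) :
    (1 - β) * Real.logb 2 (1 + s) <
      (1 - β) ^ 2 * Real.logb 2 (1 + (1 + δ ^ 2) * s)
        + β * (1 - β) * Real.logb 2 (1 + s)
        + β * (1 - β) * Real.logb 2 (1 + δ ^ 2 * s) :=
  stmt_4_general s δ β hs hδ0 hβ0 hβ1
end

section
/- Consider a two-path channel with direct-path gain g ∈ ℂ, g ≠ 0, and reflected-path gain g·δ·e^{iς} with 0 < δ < 1 and ς ∈ ℝ. Suppose the transmitter forms a two-lobe multi-beam with per-beam coefficient a·e^{-iς} on the second beam (correct phase ς but amplitude a ≥ 0), normalized to total radiated power one. Then the received power equals |g|²·(1 + aδ)²/(1 + a²), and this strictly exceeds the single-beam received power |g|² if and only if 0 < a < 2δ/(1 − δ²). Hence the multi-beam outperforms the single beam for every positive amplitude below the threshold 2δ/(1 − δ²), showing low sensitivity to amplitude-estimation error. -/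
/-! With the phase-matched coefficient `a·e^{-iς}` the two path contributions add coherently,
so the received amplitude is `g(1 + aδ)` while the normalization divides the power by `1 + a²`.
The multi-beam wins iff `(1 + aδ)² > 1 + a²`, i.e. `a(2δ - a(1 - δ²)) > 0`, a quadratic condition
in `a` whose positive root is `2δ/(1 - δ²)`. -/

open Complex

lemma phaseMatched_add_reflected (g : ℂ) (a δ ς : ℝ) :
    g + a * exp (-ς * I) * (g * δ * exp (ς * I)) = g * ((1 + a * δ : ℝ) : ℂ) := by
  have hcancel : exp (-ς * I) * exp (ς * I) = 1 := by
    rw [← exp_add, neg_mul, neg_add_cancel, exp_zero]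
  push_cast
  linear_combination (a * g * δ : ℂ) * hcancel

lemma norm_ofReal_mul_exp_neg_mul_I (a ς : ℝ) : ‖(a : ℂ) * exp (-ς * I)‖ = |a| := by
  rw [norm_mul, norm_real, Real.norm_eq_abs, ← ofReal_neg, norm_exp_ofReal_mul_I, mul_one]

lemma receivedPower_phaseMatched (g : ℂ) (a δ ς : ℝ) :
    ‖g + a * exp (-ς * I) * (g * δ * exp (ς * I))‖ ^ 2 / (1 + ‖(a : ℂ) * exp (-ς * I)‖ ^ 2)
      = ‖g‖ ^ 2 * (1 + a * δ) ^ 2 / (1 + a ^ 2) := by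
  rw [phaseMatched_add_reflected, norm_ofReal_mul_exp_neg_mul_I, norm_mul, norm_real,
    Real.norm_eq_abs, mul_pow, sq_abs, sq_abs]

lemma one_add_sq_lt_one_add_mul_sq_iff {a δ : ℝ} (hδ0 : 0 ≤ δ) (hδ1 : δ < 1) :
    1 + a ^ 2 < (1 + a * δ) ^ 2 ↔ 0 < a ∧ a < 2 * δ / (1 - δ ^ 2) := by
  have hδ2 : 0 < 1 - δ ^ 2 := by nlinarith
  have hexpand : (1 + a * δ) ^ 2 - (1 + a ^ 2) = a * (2 * δ - a * (1 - δ ^ 2)) := by ring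
  rw [← sub_pos, hexpand, mul_pos_iff, lt_div_iff₀ hδ2, ← sub_pos (a := 2 * δ)]
  refine or_iff_left_of_imp fun ⟨ha, hb⟩ => ?_
  -- for `a < 0` the second factor is positive, so the product is negative
  nlinarith [mul_pos (neg_pos.2 ha) hδ2]

theorem stmt_7_general (g : ℂ) (hg : g ≠ 0) (δ : ℝ) (hδ0 : 0 < δ) (hδ1 : δ < 1) (ς : ℝ)
    (a : ℝ)
    (c : ℂ) (hc : c = (a : ℂ) * Complex.exp (-(ς : ℂ) * Complex.I))
    (P : ℝ)
    (hP : P = (‖g + c * (g * (δ : ℂ) * Complex.exp ((ς : ℂ) * Complex.I))‖) ^ 2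
        / (1 + (‖c‖) ^ 2)) :
    P = (‖g‖) ^ 2 * (1 + a * δ) ^ 2 / (1 + a ^ 2) ∧
    (P > (‖g‖) ^ 2 ↔ 0 < a ∧ a < 2 * δ / (1 - δ ^ 2)) := by
  have hPval : P = ‖g‖ ^ 2 * (1 + a * δ) ^ 2 / (1 + a ^ 2) := by
    rw [hP, hc, receivedPower_phaseMatched]
  refine ⟨hPval, ?_⟩
  have hg2 : 0 < ‖g‖ ^ 2 := by positivity
  rw [hPval, gt_iff_lt, lt_div_iff₀ (by positivity), mul_lt_mul_iff_right₀ hg2,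
    one_add_sq_lt_one_add_mul_sq_iff hδ0.le hδ1]

/-- In a two-path channel with direct gain `g ≠ 0` and reflected gain
`g·δ·e^{iς}` (`0 < δ < 1`), a two-lobe multi-beam whose second-beam coefficient is
`a·e^{-iς}` (correct phase, amplitude `a ≥ 0`), normalized to unit total radiated power,
yields received power `|g|²(1 + aδ)²/(1 + a²)`, which strictly exceeds the single-beam
power `|g|²` iff `0 < a < 2δ/(1 − δ²)`. -/
theorem stmt_7 (g : ℂ) (hg : g ≠ 0) (δ : ℝ) (hδ0 : 0 < δ) (hδ1 : δ < 1) (ς : ℝ)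
    (a : ℝ) (ha : 0 ≤ a)
    (c : ℂ) (hc : c = (a : ℂ) * Complex.exp (-(ς : ℂ) * Complex.I))
    (P : ℝ)
    (hP : P = (‖g + c * (g * (δ : ℂ) * Complex.exp ((ς : ℂ) * Complex.I))‖) ^ 2
        / (1 + (‖c‖) ^ 2)) :
    P = (‖g‖) ^ 2 * (1 + a * δ) ^ 2 / (1 + a ^ 2) ∧
    (P > (‖g‖) ^ 2 ↔ 0 < a ∧ a < 2 * δ / (1 - δ ^ 2)) :=
  stmt_7_general g hg δ hδ0 hδ1 ς a c hc P hP
end
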